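/- arXiv:2209.11491 — 4 statements merged into one kernel-verified Lean document; each statement's English description precedes it below -/
import Mathlib

section
/- Let f_1,…,f_n : [0,∞) → ℝ be bounded continuous functions and define u(x,i) := Σ_{k=1}^n 2p_k ∫₀^∞ g_r((x,i),(y,k)) f_k(y) dy. Then the value u(0,i) is the same for every leg i and equals (2/θ)·Σ_{k=1}^n p_k ∫₀^∞ e^{−θy} f_k(y) dy; moreover for each i the right derivative u⁺(0,i) := lim_{δ↓0} (u(δ,i) − u(0,i))/δ exists, and the Kirchhoff (gluing) condition Σ_{i=1}^n p_i · u⁺(0,i) = 0 holds. -/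
/-!
Since `max(x,y) + min(x,y) = x + y`, the Green function splits as
`g_r((x,i),(y,k)) = (1/θ) (1_{i=k} K(x,y) / p_i + e^{-θx} e^{-θy})` with
`K(x,y) = e^{-θ max(x,y)} sinh(θ min(x,y))`, so that
`u(x,i) = (2/θ) (∫ K(x,y) f_i(y) dy + e^{-θx} S)`, where `S = Σ_k p_k ∫ e^{-θy} f_k(y) dy`.
As `K(0,·) = 0`, this gives `u(0,i) = 2S/θ`. Moreover `K(x,y)/x → θ e^{-θy}`, dominated by
`e^{-θy} sinh(θx)/x`, so by dominated convergence `u⁺(0,i) = 2 ∫ e^{-θy} f_i(y) dy - 2S`, and the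
weights `p_i`, which sum to `1`, turn this into `Σ_i p_i u⁺(0,i) = 2S - 2S = 0`.
-/

open Filter Topology MeasureTheory

/-- Green function of the Brownian spider with `n` legs, weights `p`, and `θ = √(2r)`. -/
noncomputable def spiderGreen (n : ℕ) (p : Fin n → ℝ) (θ : ℝ)
    (x : ℝ) (i : Fin n) (y : ℝ) (j : Fin n) : ℝ :=
  if i = j then
    (1/θ) * Real.exp (-θ * max x y) *
      ((1 / p i) * Real.sinh (θ * min x y) + Real.exp (-θ * min x y))
  else (1/θ) * Real.exp (-θ * x) * Real.exp (-θ * y)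

open Real Set

lemma tendsto_div_nhdsGT_of_hasDerivAt {g : ℝ → ℝ} {g' : ℝ} (hg : HasDerivAt g g' 0)
    (hg0 : g 0 = 0) : Tendsto (fun x => g x / x) (𝓝[>] 0) (𝓝 g') := by
  simpa [hg0, div_eq_inv_mul] using hg.tendsto_slope_zero_right

lemma tendsto_sinh_mul_div (θ : ℝ) : Tendsto (fun x => sinh (θ * x) / x) (𝓝[>] 0) (𝓝 θ) := by
  refine tendsto_div_nhdsGT_of_hasDerivAt ?_ (by simp)
  simpa using ((hasDerivAt_id (0:ℝ)).const_mul θ).sinh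

lemma tendsto_exp_neg_mul_sub_one_div (θ : ℝ) :
    Tendsto (fun x => (exp (-θ * x) - 1) / x) (𝓝[>] 0) (𝓝 (-θ)) := by
  refine tendsto_div_nhdsGT_of_hasDerivAt ?_ (by simp)
  simpa using (((hasDerivAt_id (0:ℝ)).const_mul (-θ)).exp).sub_const 1

/-- `θ` times the Green function, for the speed measure `2 dy`, of Brownian motion on `[0, ∞)`
killed at `0`. -/
noncomputable def killedKernel (θ x y : ℝ) : ℝ := exp (-θ * max x y) * sinh (θ * min x y)

lemma spiderGreen_eq (n : ℕ) (p : Fin n → ℝ) (θ x : ℝ) (i : Fin n) (y : ℝ) (k : Fin n) :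
    spiderGreen n p θ x i y k =
      (1 / θ) * ((if i = k then (p i)⁻¹ * killedKernel θ x y else 0) +
        exp (-θ * x) * exp (-θ * y)) := by
  have hexp : exp (-θ * max x y) * exp (-θ * min x y) = exp (-θ * x) * exp (-θ * y) := by
    rw [← exp_add, ← exp_add, ← mul_add, ← mul_add, add_comm, min_add_max]
  unfold spiderGreen killedKernel
  split_ifs
  · rw [← hexp]; ring
  · ring

lemma killedKernel_zero_left (θ : ℝ) {y : ℝ} (hy : 0 ≤ y) : killedKernel θ 0 y = 0 := by
  simp [killedKernel, min_eq_left hy]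

lemma killedKernel_of_le (θ : ℝ) {x y : ℝ} (hxy : x ≤ y) :
    killedKernel θ x y = exp (-θ * y) * sinh (θ * x) := by
  rw [killedKernel, max_eq_right hxy, min_eq_left hxy]

lemma abs_killedKernel_le {θ x y : ℝ} (hθ : 0 ≤ θ) (hx : 0 ≤ x) (hy : 0 ≤ y) :
    |killedKernel θ x y| ≤ exp (-θ * y) * sinh (θ * x) := by
  rcases le_total x y with hxy | hyx
  · rw [killedKernel_of_le θ hxy, abs_of_nonneg (by positivity)]
  · have hswap : exp (-θ * x) * exp (θ * y) ≤ exp (-θ * y) * exp (θ * x) := by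
      rw [← exp_add, ← exp_add]; exact exp_le_exp.mpr (by nlinarith)
    rw [killedKernel, max_eq_left hyx, min_eq_right hyx, abs_of_nonneg (by positivity),
      sinh_eq, sinh_eq, ← neg_mul, ← neg_mul]
    nlinarith [exp_pos (-θ * x), exp_pos (-θ * y)]

lemma continuous_killedKernel (θ x : ℝ) : Continuous (killedKernel θ x) := by
  unfold killedKernel; fun_prop

lemma tendsto_killedKernel_div (θ : ℝ) {y : ℝ} (hy : 0 < y) :
    Tendsto (fun x => killedKernel θ x y / x) (𝓝[>] 0) (𝓝 (exp (-θ * y) * θ)) := by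
  refine ((tendsto_sinh_mul_div θ).const_mul (exp (-θ * y))).congr' ?_
  filter_upwards [Ioo_mem_nhdsGT hy] with x hx
  rw [killedKernel_of_le θ hx.2.le, mul_div_assoc]

section BoundedIntegrand

variable {θ C : ℝ} {f : ℝ → ℝ} (hθ : 0 < θ)
  (hf : AEStronglyMeasurable f (volume.restrict (Ioi 0)))
  (hfC : ∀ᵐ y ∂volume.restrict (Ioi 0), ‖f y‖ ≤ C)
include hθ hf hfC

lemma integrableOn_exp_neg_mul_mul :
    IntegrableOn (fun y => exp (-θ * y) * f y) (Ioi 0) :=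
  (exp_neg_integrableOn_Ioi 0 hθ).mul_bdd hf hfC

lemma integrableOn_killedKernel_mul {x : ℝ} (hx : 0 ≤ x) :
    IntegrableOn (fun y => killedKernel θ x y * f y) (Ioi 0) := by
  refine Integrable.mul_bdd ?_ hf hfC
  refine (((exp_neg_integrableOn_Ioi 0 hθ).mul_const (sinh (θ * x)))).mono'
    (continuous_killedKernel θ x).aestronglyMeasurable ?_
  filter_upwards [ae_restrict_mem measurableSet_Ioi] with y hy
  exact abs_killedKernel_le hθ.le hx (le_of_lt hy)

lemma tendsto_integral_killedKernel_mul_div :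
    Tendsto (fun x => (∫ y in Ioi 0, killedKernel θ x y * f y) / x) (𝓝[>] 0)
      (𝓝 (θ * ∫ y in Ioi 0, exp (-θ * y) * f y)) := by
  obtain ⟨M, hM⟩ : ∃ M, ∀ᶠ x in 𝓝[>] 0, sinh (θ * x) / x ≤ M :=
    (tendsto_sinh_mul_div θ).isBoundedUnder_le
  have hlim : Tendsto (fun x => ∫ y in Ioi 0, killedKernel θ x y / x * f y) (𝓝[>] 0)
      (𝓝 (∫ y in Ioi 0, exp (-θ * y) * θ * f y)) := by
    refine tendsto_integral_filter_of_dominated_convergence (fun y => M * C * exp (-θ * y))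
      ?_ ?_ ((exp_neg_integrableOn_Ioi 0 hθ).const_mul _) ?_
    · exact Eventually.of_forall fun x =>
        ((continuous_killedKernel θ x).div_const x).aestronglyMeasurable.mul hf
    · filter_upwards [hM, self_mem_nhdsWithin] with x hxM hx
      filter_upwards [hfC, ae_restrict_mem measurableSet_Ioi] with y hyC hy
      have hx : (0 : ℝ) < x := hx
      have hK : |killedKernel θ x y| / x ≤ M * exp (-θ * y) := by
        calc |killedKernel θ x y| / x ≤ exp (-θ * y) * sinh (θ * x) / x := by
              gcongr; exact abs_killedKernel_le hθ.le hx.le (le_of_lt hy)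
          _ ≤ M * exp (-θ * y) := by
              rw [mul_div_assoc, mul_comm]; gcongr
      rw [norm_mul, norm_div, Real.norm_eq_abs, Real.norm_eq_abs, abs_of_pos hx]
      calc |killedKernel θ x y| / x * ‖f y‖ ≤ M * exp (-θ * y) * C := by
            gcongr
            exact (div_nonneg (abs_nonneg _) hx.le).trans hK
        _ = M * C * exp (-θ * y) := by ring
    · filter_upwards [ae_restrict_mem measurableSet_Ioi] with y hy
      exact (tendsto_killedKernel_div θ hy).mul_const (f y)
  rw [← integral_const_mul]
  refine (hlim.congr fun x => ?_).trans_eq ?_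
  · rw [← integral_div]
    exact integral_congr_ae (ae_of_all _ fun y => by ring)
  · exact congrArg 𝓝 (integral_congr_ae (ae_of_all _ fun y => by ring))

end BoundedIntegrand

lemma sum_integral_spiderGreen_mul {n : ℕ} {p : Fin n → ℝ} {θ x : ℝ} {f : Fin n → ℝ → ℝ}
    {C : Fin n → ℝ} (hp : ∀ k, p k ≠ 0) (hθ : 0 < θ)
    (hf : ∀ k, AEStronglyMeasurable (f k) (volume.restrict (Ioi 0)))
    (hfC : ∀ k, ∀ᵐ y ∂volume.restrict (Ioi 0), ‖f k y‖ ≤ C k) (hx : 0 ≤ x) (i : Fin n) :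
    ∑ k, 2 * p k * ∫ y in Ioi 0, spiderGreen n p θ x i y k * f k y =
      (2 / θ) * ((∫ y in Ioi 0, killedKernel θ x y * f i y) +
        exp (-θ * x) * ∑ k, p k * ∫ y in Ioi 0, exp (-θ * y) * f k y) := by
  set J := ∫ y in Ioi 0, killedKernel θ x y * f i y
  set I := fun k => ∫ y in Ioi 0, exp (-θ * y) * f k y
  have hleg : ∀ k, ∫ y in Ioi 0, spiderGreen n p θ x i y k * f k y =
      (1 / θ) * ((if i = k then (p i)⁻¹ * J else 0) + exp (-θ * x) * I k) := by
    intro k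
    have hE := (integrableOn_exp_neg_mul_mul hθ (hf k) (hfC k)).const_mul (exp (-θ * x))
    by_cases hik : i = k
    · subst hik
      have hK := (integrableOn_killedKernel_mul hθ (hf i) (hfC i) hx).const_mul (p i)⁻¹
      simp only [spiderGreen_eq, ↓reduceIte, add_mul, mul_assoc]
      rw [integral_const_mul, integral_add hK hE, integral_const_mul, integral_const_mul]
    · simp_rw [spiderGreen_eq, if_neg hik, zero_add, mul_assoc]
      rw [integral_const_mul, integral_const_mul]
  calc ∑ k, 2 * p k * ∫ y in Ioi 0, spiderGreen n p θ x i y k * f k y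
      = (2 / θ) * (∑ k, p k * (if i = k then (p i)⁻¹ * J else 0) +
          exp (-θ * x) * ∑ k, p k * I k) := by
        simp_rw [hleg, Finset.mul_sum, ← Finset.sum_add_distrib, Finset.mul_sum]
        exact Finset.sum_congr rfl fun k _ => by ring
    _ = _ := by
        simp only [mul_ite, mul_zero, Finset.sum_ite_eq, Finset.mem_univ, ↓reduceIte,
          mul_inv_cancel_left₀ (hp i), J, I]

lemma sum_mul_sub_weighted_sum {ι : Type*} [Fintype ι] {p a : ι → ℝ} (hp : ∑ i, p i = 1) :
    ∑ i, p i * (a i - ∑ k, p k * a k) = 0 := by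
  simp only [mul_sub, Finset.sum_sub_distrib, ← Finset.sum_mul, hp, one_mul, sub_self]

theorem stmt_5_general (n : ℕ) (p : Fin n → ℝ)
    (hp : ∀ k, 0 < p k) (hpsum : ∑ k, p k = 1)
    (r : ℝ) (hr : 0 < r) (θ : ℝ) (hθ : θ = Real.sqrt (2 * r))
    (f : Fin n → ℝ → ℝ)
    (hf_cont : ∀ k, ContinuousOn (f k) (Set.Ici 0))
    (hf_bdd : ∀ k, ∃ C, ∀ y ≥ (0:ℝ), |f k y| ≤ C)
    (u : ℝ → Fin n → ℝ)
    (hu : ∀ x i, u x i =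
      ∑ k, 2 * p k * ∫ y in Set.Ioi (0:ℝ), spiderGreen n p θ x i y k * f k y) :
    (∀ i, u 0 i =
      (2/θ) * ∑ k, p k * ∫ y in Set.Ioi (0:ℝ), Real.exp (-θ * y) * f k y) ∧
    ∃ d : Fin n → ℝ,
      (∀ i, Tendsto (fun δ => (u δ i - u 0 i) / δ) (𝓝[>] 0) (𝓝 (d i))) ∧
      ∑ i, p i * d i = 0 := by
  have hθ0 : 0 < θ := hθ ▸ Real.sqrt_pos.mpr (by linarith)
  have hf k : AEStronglyMeasurable (f k) (volume.restrict (Ioi 0)) :=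
    ((hf_cont k).mono Ioi_subset_Ici_self).aestronglyMeasurable measurableSet_Ioi
  choose C hC using hf_bdd
  have hfC k : ∀ᵐ y ∂volume.restrict (Ioi 0), ‖f k y‖ ≤ C k := by
    filter_upwards [ae_restrict_mem measurableSet_Ioi] with y hy using hC k y (le_of_lt hy)
  set I := fun k => ∫ y in Ioi 0, exp (-θ * y) * f k y
  set S := ∑ k, p k * I k
  have hu_eq : ∀ x, 0 ≤ x → ∀ i,
      u x i = (2 / θ) * ((∫ y in Ioi 0, killedKernel θ x y * f i y) + exp (-θ * x) * S) :=
    fun x hx i =>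
      (hu x i).trans (sum_integral_spiderGreen_mul (fun k => (hp k).ne') hθ0 hf hfC hx i)
  have hu0 i : u 0 i = (2 / θ) * S := by
    rw [hu_eq 0 le_rfl, setIntegral_congr_fun measurableSet_Ioi
      (fun y hy => by rw [killedKernel_zero_left θ (le_of_lt hy), zero_mul]), integral_zero]
    simp
  refine ⟨hu0, fun i => 2 * (I i - S), fun i => ?_, ?_⟩
  · have hlim := ((tendsto_integral_killedKernel_mul_div hθ0 (hf i) (hfC i)).add
      ((tendsto_exp_neg_mul_sub_one_div θ).mul_const S)).const_mul (2 / θ)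
    refine (hlim.congr' ?_).trans_eq ?_
    · filter_upwards [self_mem_nhdsWithin] with x hx
      rw [hu_eq x (le_of_lt hx), hu0]
      field_simp
      ring
    · congr 1
      change 2 / θ * (θ * I i + -θ * S) = 2 * (I i - S)
      field_simp
      ring
  · simp only [mul_left_comm _ (2 : ℝ), ← Finset.mul_sum]
    exact mul_eq_zero_of_right 2 (sum_mul_sub_weighted_sum hpsum)

/-- the resolvent `u` of the Brownian spider has a leg-independent value at the
origin, its right derivatives at the origin exist on each leg, and the Kirchhoff (gluing)
condition `Σ p_i u⁺(0,i) = 0` holds. -/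
theorem stmt_5 (n : ℕ) (hn : 1 ≤ n) (p : Fin n → ℝ)
    (hp : ∀ k, 0 < p k) (hpsum : ∑ k, p k = 1)
    (r : ℝ) (hr : 0 < r) (θ : ℝ) (hθ : θ = Real.sqrt (2 * r))
    (f : Fin n → ℝ → ℝ)
    (hf_cont : ∀ k, ContinuousOn (f k) (Set.Ici 0))
    (hf_bdd : ∀ k, ∃ C, ∀ y ≥ (0:ℝ), |f k y| ≤ C)
    (u : ℝ → Fin n → ℝ)
    (hu : ∀ x i, u x i =
      ∑ k, 2 * p k * ∫ y in Set.Ioi (0:ℝ), spiderGreen n p θ x i y k * f k y) :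
    (∀ i, u 0 i =
      (2/θ) * ∑ k, p k * ∫ y in Set.Ioi (0:ℝ), Real.exp (-θ * y) * f k y) ∧
    ∃ d : Fin n → ℝ,
      (∀ i, Tendsto (fun δ => (u δ i - u 0 i) / δ) (𝓝[>] 0) (𝓝 (d i))) ∧
      ∑ i, p i * d i = 0 :=
  stmt_5_general n p hp hpsum r hr θ hθ f hf_cont hf_bdd u hu
end

section
/- Let f be the function represented by a representing datum (σ_1,…,σ_n, a_1,…,a_n, s₀). Then for every x > 0 and every leg i the right derivative f⁺(x,i) exists and the representing measure of the tail is recovered from f by σ_i((x,∞)) + a_i = (p_i/θ)·e^{−θx}·( f⁺(x,i) + θ·f(x,i) ). -/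
open Filter Topology MeasureTheory

/-- Martin kernel of the Brownian spider normalized at the origin, for poles `(y,k)` with
`y > 0`. -/
noncomputable def martinKernel0 (n : ℕ) (p : Fin n → ℝ) (θ : ℝ)
    (x : ℝ) (i : Fin n) (y : ℝ) (k : Fin n) : ℝ :=
  if i = k then
    (if x ≤ y then (1 / p i) * Real.sinh (θ * x) + Real.exp (-θ * x)
     else Real.exp (-θ * x) * (1 + (1 / p i) * Real.exp (θ * y) * Real.sinh (θ * y)))
  else Real.exp (-θ * x)

/-- Boundary Martin kernel of the Brownian spider normalized at the origin, for boundary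
points `(∞,k)`. -/
noncomputable def martinKernel0Inf (n : ℕ) (p : Fin n → ℝ) (θ : ℝ)
    (x : ℝ) (i k : Fin n) : ℝ :=
  if i = k then (1 / p i) * Real.sinh (θ * x) + Real.exp (-θ * x)
  else Real.exp (-θ * x)

/-!
Write `E(t) = e^{θt} sinh(θt)`. Every kernel is `e^{-θx}` times `1 + E(min x y)/p_i` on its own
leg (with `min x ∞ = x`) and times `1` on the other legs, so the normalisation of the datum gives
`f(x,i) = e^{-θx} (1 + (a_i E(x) + ∫ E(min x y) σ_i(dy)) / p_i)`. By dominated convergence the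
right derivative of `z ↦ ∫ E(min z y) σ(dy)` at `x` is `E'(x) σ((x,∞))`: the difference quotient of
`E(min · y)` is bounded by a local Lipschitz constant of `E`, vanishes for `y ≤ x` and tends to
`E'(x)` for `y > x`. Since `E'(x) = θ e^{2θx}`, adding `θ f` cancels the derivative of `e^{-θx}`
and leaves `(θ/p_i) e^{θx} (σ_i((x,∞)) + a_i)`.
-/

open Set

theorem HasDerivWithinAt.tendsto_div_slope_zero_right {f : ℝ → ℝ} {f' x : ℝ}
    (hf : HasDerivWithinAt f f' (Ioi x) x) :
    Tendsto (fun t => (f (x + t) - f x) / t) (𝓝[>] 0) (𝓝 f') := by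
  have h := (hasDerivWithinAt_iff_tendsto_slope' self_notMem_Ioi).1 hf
  rw [← add_zero x, ← map_add_left_nhdsGT, tendsto_map'_iff] at h
  refine h.congr fun t => ?_
  simp [slope_def_field]

section IntegralCompMin

variable {μ : Measure ℝ} [IsFiniteMeasure μ] {h : ℝ → ℝ} {x : ℝ}

theorem integrableOn_comp_min_Ioi (hh : Continuous h) (a z : ℝ) :
    IntegrableOn (fun y => h (min z y)) (Ioi a) μ := by
  obtain ⟨C, hC⟩ := (isCompact_Icc (a := min z a) (b := z)).exists_bound_of_continuousOn
    hh.continuousOn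
  refine IntegrableOn.of_bound (measure_lt_top _ _)
    (hh.comp (continuous_const.min continuous_id)).aestronglyMeasurable C ?_
  filter_upwards [ae_restrict_mem measurableSet_Ioi] with y hy
  exact hC _ ⟨min_le_min_left z (le_of_lt hy), min_le_left z y⟩

theorem tendsto_slope_comp_min {h' : ℝ} (hd : HasDerivAt h h' x) (y : ℝ) :
    Tendsto (slope (fun z => h (min z y)) x) (𝓝[>] x)
      (𝓝 ((Ioi x).indicator (fun _ => h') y)) := by
  rcases le_or_gt y x with hyx | hxy
  · rw [indicator_of_notMem (notMem_Ioi.2 hyx)]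
    refine tendsto_const_nhds.congr' ?_
    filter_upwards [self_mem_nhdsWithin] with z hz
    simp [slope_def_field, min_eq_right hyx, min_eq_right (hyx.trans (le_of_lt hz))]
  · rw [indicator_of_mem (mem_Ioi.2 hxy)]
    refine (hd.tendsto_slope.mono_left (nhdsGT_le_nhdsNE x)).congr' ?_
    filter_upwards [Ioo_mem_nhdsGT hxy] with z hz
    simp [slope_def_field, min_eq_left hz.2.le, min_eq_left hxy.le]

theorem abs_slope_comp_min_le {K : NNReal} {z : ℝ} (hK : LipschitzOnWith K h (Icc x z))
    (hxz : x < z) (y : ℝ) : |slope (fun z => h (min z y)) x z| ≤ K := by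
  rcases le_or_gt y x with hyx | hxy
  · simp [slope_def_field, min_eq_right hyx, min_eq_right (hyx.trans hxz.le)]
  have hmem : min z y ∈ Icc x z := ⟨le_min hxz.le hxy.le, min_le_left z y⟩
  have hlip := hK.dist_le_mul _ hmem x (left_mem_Icc.2 hxz.le)
  rw [Real.dist_eq, Real.dist_eq, abs_of_nonneg (sub_nonneg.2 hmem.1)] at hlip
  rw [slope_def_field, min_eq_left hxy.le, abs_div, abs_of_pos (sub_pos.2 hxz),
    div_le_iff₀ (sub_pos.2 hxz)]
  exact hlip.trans (mul_le_mul_of_nonneg_left (by linarith [hmem.2]) K.2)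

theorem hasDerivWithinAt_integral_comp_min
    (hint : ∀ z, Integrable (fun y => h (min z y)) μ) (hx : ContDiffAt ℝ 1 h x) :
    HasDerivWithinAt (fun z => ∫ y, h (min z y) ∂μ) (deriv h x * μ.real (Ioi x)) (Ioi x) x := by
  rw [hasDerivWithinAt_iff_tendsto_slope' self_notMem_Ioi]
  have hslope : slope (fun z => ∫ y, h (min z y) ∂μ) x
      = fun z => ∫ y, slope (fun z => h (min z y)) x z ∂μ := by
    funext z
    simp only [slope_def_field]
    rw [← integral_sub (hint z) (hint x), integral_div]
  obtain ⟨K, t, ht, hK⟩ := hx.exists_lipschitzOnWith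
  obtain ⟨ε, hε, hball⟩ := Metric.mem_nhds_iff.1 ht
  have hlim := tendsto_integral_filter_of_dominated_convergence (μ := μ) (l := 𝓝[>] x)
    (fun _ => (K : ℝ)) ?_ ?_ (integrable_const _)
    (Eventually.of_forall (tendsto_slope_comp_min (hx.differentiableAt one_ne_zero).hasDerivAt))
  · rwa [integral_indicator_const _ measurableSet_Ioi, smul_eq_mul, mul_comm, ← hslope] at hlim
  · exact Eventually.of_forall fun z =>
      (((hint z).sub (hint x)).div_const (z - x)).aestronglyMeasurable.congr
        (Eventually.of_forall fun y => by simp [slope_def_field])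
  · filter_upwards [Ioo_mem_nhdsGT (show x < x + ε by linarith)] with z hz
    refine Eventually.of_forall fun y => abs_slope_comp_min_le (hK.mono ?_) hz.1 y
    refine fun w hw => hball ?_
    rw [Metric.mem_ball, Real.dist_eq, abs_lt]
    constructor <;> linarith [hw.1, hw.2, hz.2]

end IntegralCompMin

noncomputable def expMulSinh (θ t : ℝ) : ℝ := Real.exp (θ * t) * Real.sinh (θ * t)

theorem continuous_expMulSinh (θ : ℝ) : Continuous (expMulSinh θ) := by
  unfold expMulSinh; fun_prop

theorem contDiff_expMulSinh (θ : ℝ) : ContDiff ℝ 1 (expMulSinh θ) := by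
  unfold expMulSinh; fun_prop

theorem hasDerivAt_expMulSinh (θ t : ℝ) :
    HasDerivAt (expMulSinh θ) (θ * Real.exp (2 * θ * t)) t := by
  have hlin : HasDerivAt (fun u => θ * u) θ t := by simpa using (hasDerivAt_id t).const_mul θ
  refine (hlin.exp.mul hlin.sinh).congr_deriv ?_
  rw [show 2 * θ * t = θ * t + θ * t by ring, Real.exp_add, ← Real.cosh_add_sinh (θ * t)]
  ring

theorem exp_neg_mul_expMulSinh (θ t : ℝ) :
    Real.exp (-θ * t) * expMulSinh θ t = Real.sinh (θ * t) := by
  rw [expMulSinh, ← mul_assoc, ← Real.exp_add, neg_mul, neg_add_cancel, Real.exp_zero, one_mul]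

theorem martinKernel0_eq (n : ℕ) (p : Fin n → ℝ) (θ x : ℝ) (i : Fin n) (y : ℝ) (k : Fin n) :
    martinKernel0 n p θ x i y k =
      Real.exp (-θ * x) * (1 + if i = k then expMulSinh θ (min x y) / p i else 0) := by
  unfold martinKernel0
  split_ifs with hik hxy
  · rw [min_eq_left hxy]
    linear_combination (1 / p i) * (exp_neg_mul_expMulSinh θ x).symm
  · rw [min_eq_right (le_of_not_ge hxy), expMulSinh]
    ring
  · ring

theorem martinKernel0Inf_eq (n : ℕ) (p : Fin n → ℝ) (θ x : ℝ) (i k : Fin n) :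
    martinKernel0Inf n p θ x i k =
      Real.exp (-θ * x) * (1 + if i = k then expMulSinh θ x / p i else 0) := by
  unfold martinKernel0Inf
  split_ifs
  · linear_combination (1 / p i) * (exp_neg_mul_expMulSinh θ x).symm
  · ring

theorem setIntegral_martinKernel0_add (n : ℕ) (p : Fin n → ℝ) (θ : ℝ) (μ : Measure ℝ)
    [IsFiniteMeasure μ] (c x : ℝ) (i k : Fin n) :
    (∫ y in Ioi 0, martinKernel0 n p θ x i y k ∂μ) + c * martinKernel0Inf n p θ x i k =
      Real.exp (-θ * x) * ((μ (Ioi 0)).toReal + c + if i = k then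
        (c * expMulSinh θ x + ∫ y in Ioi 0, expMulSinh θ (min x y) ∂μ) / p i else 0) := by
  simp only [martinKernel0_eq, martinKernel0Inf_eq]
  split_ifs
  · rw [integral_const_mul, integral_add (integrable_const 1)
      ((integrableOn_comp_min_Ioi (continuous_expMulSinh θ) 0 x).div_const _), integral_div,
      setIntegral_const, smul_eq_mul, measureReal_def]
    ring
  · simp [measureReal_def]
    ring

theorem eq_exp_mul_of_represented (n : ℕ) (p : Fin n → ℝ) (θ : ℝ)
    (σ : Fin n → Measure ℝ) [∀ k, IsFiniteMeasure (σ k)] (a : Fin n → ℝ) (s₀ : ℝ)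
    (hnorm : s₀ + ∑ k, ((σ k (Ioi 0)).toReal + a k) = 1) (f : ℝ → Fin n → ℝ)
    (hf : ∀ x i, f x i = s₀ * Real.exp (-θ * x) +
      ∑ k, ((∫ y in Ioi (0:ℝ), martinKernel0 n p θ x i y k ∂(σ k)) +
        a k * martinKernel0Inf n p θ x i k)) (x : ℝ) (i : Fin n) :
    f x i = Real.exp (-θ * x) *
      (1 + (a i * expMulSinh θ x + ∫ y in Ioi 0, expMulSinh θ (min x y) ∂(σ i)) / p i) := by
  rw [Finset.sum_add_distrib] at hnorm
  simp only [hf, setIntegral_martinKernel0_add, ← Finset.mul_sum, Finset.sum_add_distrib,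
    Finset.sum_ite_eq, Finset.mem_univ, if_true]
  linear_combination Real.exp (-θ * x) * hnorm

theorem stmt_9_general (n : ℕ) (p : Fin n → ℝ)
    (hp : ∀ i, 0 < p i)
    (r : ℝ) (hr : 0 < r) (θ : ℝ) (hθ : θ = Real.sqrt (2 * r))
    (σ : Fin n → Measure ℝ) [∀ k, IsFiniteMeasure (σ k)]
    (a : Fin n → ℝ) (s₀ : ℝ)
    (hnorm : s₀ + ∑ k, ((σ k (Set.Ioi 0)).toReal + a k) = 1)
    (f : ℝ → Fin n → ℝ)
    (hf : ∀ x i, f x i = s₀ * Real.exp (-θ * x) +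
      ∑ k, ((∫ y in Set.Ioi (0:ℝ), martinKernel0 n p θ x i y k ∂(σ k)) +
        a k * martinKernel0Inf n p θ x i k)) :
    ∀ x > (0:ℝ), ∀ i, ∃ d : ℝ,
      Tendsto (fun δ => (f (x + δ) i - f x i) / δ) (𝓝[>] 0) (𝓝 d) ∧
      (σ i (Set.Ioi x)).toReal + a i = (p i / θ) * Real.exp (-θ * x) * (d + θ * f x i) := by
  intro x hx i
  have hθ0 : θ ≠ 0 := hθ ▸ (Real.sqrt_pos.2 (by positivity)).ne'
  have hpi : p i ≠ 0 := (hp i).ne'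
  have hmass : ((σ i).restrict (Ioi 0)).real (Ioi x) = (σ i (Ioi x)).toReal := by
    rw [measureReal_restrict_apply measurableSet_Ioi,
      inter_eq_left.2 (Ioi_subset_Ioi hx.le), measureReal_def]
  have htail := hasDerivWithinAt_integral_comp_min
    (fun z => integrableOn_comp_min_Ioi (μ := σ i) (continuous_expMulSinh θ) 0 z)
    (contDiff_expMulSinh θ).contDiffAt (x := x)
  rw [(hasDerivAt_expMulSinh θ x).deriv, hmass] at htail
  have hrep := eq_exp_mul_of_represented n p θ σ a s₀ hnorm f hf
  have hdecay : HasDerivAt (fun z => Real.exp (-θ * z)) (-θ * Real.exp (-θ * x)) x := by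
    simpa [mul_comm] using ((hasDerivAt_id x).const_mul (-θ)).exp
  have hF : HasDerivWithinAt (fun z => f z i) (-θ * f x i + Real.exp (-θ * x) *
      (θ * Real.exp (2 * θ * x) * ((σ i (Ioi x)).toReal + a i) / p i)) (Ioi x) x := by
    have hweight := (((hasDerivAt_expMulSinh θ x).hasDerivWithinAt.const_mul (a i)).add
      htail).div_const (p i)
    simp only [hrep]
    refine (hdecay.hasDerivWithinAt.mul (hweight.const_add 1)).congr_deriv ?_
    simp only [Pi.add_apply]
    ring
  refine ⟨_, hF.tendsto_div_slope_zero_right, ?_⟩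
  have hexp : Real.exp (-θ * x) * Real.exp (-θ * x) * Real.exp (2 * θ * x) = 1 := by
    rw [← Real.exp_add, ← Real.exp_add]; ring_nf; exact Real.exp_zero
  have hcancel : p i / θ * θ / p i = 1 := by field_simp
  calc (σ i (Ioi x)).toReal + a i
      = (p i / θ * θ / p i) * (Real.exp (-θ * x) * Real.exp (-θ * x) * Real.exp (2 * θ * x)) *
          ((σ i (Ioi x)).toReal + a i) := by rw [hcancel, hexp, one_mul, one_mul]
    _ = _ := by ring

/-- for a function `f` represented by a representing datum
`(σ_1,…,σ_n, a_1,…,a_n, s₀)`, for every `x > 0` and every leg `i` the right derivative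
`f⁺(x,i)` exists and `σ_i((x,∞)) + a_i = (p_i/θ)·e^{−θx}·(f⁺(x,i) + θ·f(x,i))`. -/
theorem stmt_9 (n : ℕ) (hn : 1 ≤ n) (p : Fin n → ℝ)
    (hp : ∀ i, 0 < p i) (hpsum : ∑ i, p i = 1)
    (r : ℝ) (hr : 0 < r) (θ : ℝ) (hθ : θ = Real.sqrt (2 * r))
    (σ : Fin n → Measure ℝ) [∀ k, IsFiniteMeasure (σ k)]
    (hσsupp : ∀ k, σ k (Set.Iic 0) = 0)
    (a : Fin n → ℝ) (ha : ∀ k, 0 ≤ a k) (s₀ : ℝ) (hs₀ : 0 ≤ s₀)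
    (hnorm : s₀ + ∑ k, ((σ k (Set.Ioi 0)).toReal + a k) = 1)
    (f : ℝ → Fin n → ℝ)
    (hf : ∀ x i, f x i = s₀ * Real.exp (-θ * x) +
      ∑ k, ((∫ y in Set.Ioi (0:ℝ), martinKernel0 n p θ x i y k ∂(σ k)) +
        a k * martinKernel0Inf n p θ x i k)) :
    ∀ x > (0:ℝ), ∀ i, ∃ d : ℝ,
      Tendsto (fun δ => (f (x + δ) i - f x i) / δ) (𝓝[>] 0) (𝓝 d) ∧
      (σ i (Set.Ioi x)).toReal + a i = (p i / θ) * Real.exp (-θ * x) * (d + θ * f x i) :=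
  stmt_9_general n p hp r hr θ hθ σ a s₀ hnorm f hf
end

section
/- Let f be the function represented by a representing datum normalized at (x₀,i₀). Then for every x with 0 < x ≤ x₀ the left derivative f⁻(x,i₀) exists and τ_{i₀}((0,x)) + t₀ + Σ_{k ≠ i₀} ( τ_k((0,∞)) + b_k ) = p_{i₀} · e^{−θx₀} · ( f(x,i₀)·ψ̃′(x,i₀) − f⁻(x,i₀)·ψ̃(x,i₀) ), where ψ̃′(x,i₀) = (1/p_{i₀})·cosh(θx) − e^{−θx}. -/
open Filter Topology MeasureTheory

/-- The minimal harmonic function `N_k(x,i)` of the Brownian spider attached to the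
boundary point `(∞,k)`. -/
noncomputable def spiderN (n : ℕ) (p : Fin n → ℝ) (θ : ℝ) (x : ℝ) (i k : Fin n) : ℝ :=
  if i = k then (1 / p i) * Real.sinh (θ * x) + Real.exp (-θ * x)
  else Real.exp (-θ * x)

/-- The function `ψ̃(x,i) = (1/θ)((1/p_i)·sinh(θx) + e^{−θx})`. -/
noncomputable def spiderPsiT (n : ℕ) (p : Fin n → ℝ) (θ : ℝ) (x : ℝ) (i : Fin n) : ℝ :=
  (1/θ) * ((1 / p i) * Real.sinh (θ * x) + Real.exp (-θ * x))

/-!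
On the leg `i₀` and for `0 < ξ ≤ x₀`, every Martin kernel is a combination of
`E ξ = e^{-θ(ξ-x₀)}` and `N ξ = N_{i₀}(ξ,i₀)`: the kernels of the origin, of the other legs and of
poles `y ≤ ξ` on the leg are multiples of `E ξ`, while for `y ≥ ξ` the kernel is `N ξ * h y` with
`h = spiderMartinCoeff` bounded. Hence, for constants
`S` and `c`, `f(ξ,i₀) = E ξ * (S + τ_{i₀}((0,ξ])) + N ξ * (c + ∫_{(ξ,∞)} h dτ_{i₀})`.
Because `N y * h y = E y` for `y ≤ x₀`, moving `ξ` left of `x` across the mass of `(ξ,x)` changes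
this by `O((x-ξ) τ_{i₀}((ξ,x))) = o(x-ξ)`, so the left derivative at `x` is that of the same
expression with the coefficients frozen at `τ_{i₀}((0,x))` and `∫_{[x,∞)} h dτ_{i₀}`. The identity
is then the constancy of the Wronskian of `E` and `N = θ ψ̃`.
-/

open Set

theorem hasStrictDerivAt_exp_neg_mul_sub (θ x₀ x : ℝ) :
    HasStrictDerivAt (fun ξ => Real.exp (-θ * (ξ - x₀))) (-θ * Real.exp (-θ * (x - x₀))) x :=
  (((hasStrictDerivAt_id x).sub (hasStrictDerivAt_const x x₀)).const_mul (-θ)).exp.congr_deriv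
    (by simp only [Pi.sub_apply, id]; ring)

theorem exp_neg_mul_sub (θ x x₀ : ℝ) :
    Real.exp (-θ * (x - x₀)) = Real.exp (-θ * x) / Real.exp (-θ * x₀) := by
  rw [← Real.exp_sub]; ring_nf

theorem HasDerivWithinAt.tendsto_sub_div_nhdsGT {f : ℝ → ℝ} {x d : ℝ}
    (h : HasDerivWithinAt f d (Iio x) x) :
    Tendsto (fun δ => (f x - f (x - δ)) / δ) (𝓝[>] 0) (𝓝 d) := by
  have hslope := (hasDerivWithinAt_iff_tendsto_slope' (self_notMem_Iio (a := x))).1 h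
  have hsub : Tendsto (fun δ => x - δ) (𝓝[>] 0) (𝓝[<] x) := by
    have := (Filter.map_subLeft_nhdsGT (c := x) (a := 0)).le
    rwa [sub_zero] at this
  refine (hslope.comp hsub).congr fun δ => ?_
  simp only [Function.comp_apply, slope_def_field, sub_sub_cancel_left, div_neg, ← neg_div, neg_sub]

theorem tendsto_measureReal_Ioo_nhdsLT (μ : Measure ℝ) [IsFiniteMeasure μ] (x : ℝ) :
    Tendsto (fun ξ => μ.real (Ioo ξ x)) (𝓝[<] x) (𝓝 0) := by
  have hempty : (⋂ r > (0 : ℝ), Ioo (x - r) x) = ∅ :=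
    eq_empty_of_forall_notMem fun y hy => by
      have := mem_iInter₂.1 hy (x - y) (sub_pos.2 (mem_iInter₂.1 hy 1 one_pos).2)
      simp at this
  have hδ := tendsto_measure_biInter_gt (μ := μ) (s := fun r => Ioo (x - r) x) (a := 0)
    (fun _ _ => measurableSet_Ioo.nullMeasurableSet)
    (fun _ _ _ hij => Ioo_subset_Ioo_left (by linarith)) ⟨1, one_pos, measure_ne_top μ _⟩
  rw [hempty, measure_empty] at hδ
  have hsub : Tendsto (fun ξ => x - ξ) (𝓝[<] x) (𝓝[>] 0) := by
    have := (Filter.map_subLeft_nhdsLT (c := x) (a := x)).le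
    rwa [sub_self] at this
  simpa [Function.comp_def, Measure.real] using
    (ENNReal.tendsto_toReal ENNReal.zero_ne_top).comp (hδ.comp hsub)

theorem hasDerivWithinAt_zero_of_abs_le_mul {f g : ℝ → ℝ} {s : Set ℝ} {x C : ℝ}
    (hfx : f x = 0) (hg : Tendsto g (𝓝[s] x) (𝓝 0))
    (hbound : ∀ᶠ ξ in 𝓝[s] x, |f ξ| ≤ C * |(ξ - x) * g ξ|) :
    HasDerivWithinAt f 0 s x := by
  have hO : f =O[𝓝[s] x] fun ξ => (ξ - x) * g ξ := Asymptotics.IsBigO.of_bound C hbound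
  have ho : (fun ξ => (ξ - x) * g ξ) =o[𝓝[s] x] fun ξ => ξ - x := by
    simpa using (Asymptotics.isBigO_refl (fun ξ => ξ - x) _).mul_isLittleO
      ((Asymptotics.isLittleO_one_iff ℝ).2 hg)
  simpa [hasDerivWithinAt_iff_isLittleO, hfx] using hO.trans_isLittleO ho

section LeftDerivative

variable {μ : Measure ℝ} [IsFiniteMeasure μ] {E N h : ℝ → ℝ} {a x : ℝ}

theorem measureReal_Ioc_add_setIntegral_Ioi (hax : a < x) (hh : IntegrableOn h (Ici x) μ)
    (hNh : N x * h x = E x) :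
    E x * μ.real (Ioc a x) + N x * ∫ y in Ioi x, h y ∂μ =
      E x * μ.real (Ioo a x) + N x * ∫ y in Ici x, h y ∂μ := by
  have hdisj : Disjoint {x} (Ioi x) := disjoint_singleton_left.2 (lt_irrefl x)
  have hμ : μ.real (Ioc a x) = μ.real {x} + μ.real (Ioo a x) := by
    rw [← Ioo_insert_right hax, insert_eq,
      measureReal_union (disjoint_singleton_left.2 (by simp)) measurableSet_Ioo]
  have hint : ∫ y in Ici x, h y ∂μ = μ.real {x} * h x + ∫ y in Ioi x, h y ∂μ := by
    rw [← Ioi_insert, insert_eq, setIntegral_union hdisj measurableSet_Ioi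
      (hh.mono_set (by simp)) (hh.mono_set Ioi_subset_Ici_self), integral_singleton, smul_eq_mul]
  rw [hμ, hint, ← hNh]
  ring

theorem measureReal_Ioc_add_setIntegral_Ioi_of_lt {ξ : ℝ} (haξ : a < ξ) (hξx : ξ < x)
    (hh : IntegrableOn h (Ioi ξ) μ) :
    E ξ * μ.real (Ioc a ξ) + N ξ * ∫ y in Ioi ξ, h y ∂μ =
      E ξ * μ.real (Ioo a x) + N ξ * (∫ y in Ici x, h y ∂μ) +
        ∫ y in Ioo ξ x, (N ξ * h y - E ξ) ∂μ := by
  have hIoo : IntegrableOn h (Ioo ξ x) μ := hh.mono_set Ioo_subset_Ioi_self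
  have hμ : μ.real (Ioo a x) = μ.real (Ioc a ξ) + μ.real (Ioo ξ x) := by
    rw [← Ioc_union_Ioo_eq_Ioo haξ.le hξx, measureReal_union
      ((Ioc_disjoint_Ioi le_rfl).mono_right Ioo_subset_Ioi_self) measurableSet_Ioo]
  have hint : ∫ y in Ioi ξ, h y ∂μ = (∫ y in Ioo ξ x, h y ∂μ) + ∫ y in Ici x, h y ∂μ := by
    rw [← Ioo_union_Ici_eq_Ioi hξx, setIntegral_union
      ((Iio_disjoint_Ici le_rfl).mono_left Ioo_subset_Iio_self) measurableSet_Ici hIoo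
      (hh.mono_set (Ici_subset_Ioi.2 hξx))]
  rw [hμ, hint, integral_sub (hIoo.const_mul _) (integrableOn_const (measure_ne_top μ _)),
    integral_const_mul, setIntegral_const, smul_eq_mul]
  ring

theorem abs_setIntegral_Ioo_sub_le {ξ H : ℝ} {KE KN : NNReal} {s : Set ℝ} (hs : Icc ξ x ⊆ s)
    (hE : LipschitzOnWith KE E s) (hN : LipschitzOnWith KN N s)
    (hH : ∀ y ∈ Ioo ξ x, |h y| ≤ H) (hNh : ∀ y ∈ Ioo ξ x, N y * h y = E y) :
    |∫ y in Ioo ξ x, (N ξ * h y - E ξ) ∂μ| ≤ (H * KN + KE) * ((x - ξ) * μ.real (Ioo ξ x)) := by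
  rw [← Real.norm_eq_abs, ← mul_assoc]
  refine norm_setIntegral_le_of_norm_le_const (measure_lt_top μ _) fun y hy => ?_
  have hξ : ξ ∈ s := hs ⟨le_rfl, (hy.1.trans hy.2).le⟩
  have hy' : y ∈ s := hs (Ioo_subset_Icc_self hy)
  have hNy : |N ξ - N y| ≤ KN * (y - ξ) := by
    simpa [Real.dist_eq, abs_of_neg (sub_neg.2 hy.1)] using hN.dist_le_mul ξ hξ y hy'
  have hEy : |E y - E ξ| ≤ KE * (y - ξ) := by
    simpa [Real.dist_eq, abs_of_pos (sub_pos.2 hy.1)] using hE.dist_le_mul y hy' ξ hξ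
  have hyx : y - ξ ≤ x - ξ := by linarith [hy.2]
  have hH0 : 0 ≤ H := (abs_nonneg _).trans (hH y hy)
  calc ‖N ξ * h y - E ξ‖ = |h y * (N ξ - N y) + (E y - E ξ)| := by
        rw [Real.norm_eq_abs, ← hNh y hy]; ring_nf
    _ ≤ |h y| * |N ξ - N y| + |E y - E ξ| := by rw [← abs_mul]; exact abs_add_le _ _
    _ ≤ H * (KN * (y - ξ)) + KE * (y - ξ) := by gcongr; exact hH y hy
    _ ≤ (H * KN + KE) * (x - ξ) := by
        nlinarith [mul_nonneg (add_nonneg (mul_nonneg hH0 KN.coe_nonneg) KE.coe_nonneg)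
          (sub_nonneg.2 hyx)]

theorem hasDerivWithinAt_Iio_measureReal_Ioc_add_setIntegral_Ioi {E' N' H : ℝ}
    (hE : HasStrictDerivAt E E' x) (hN : HasStrictDerivAt N N' x) (hax : a < x)
    (hh : IntegrableOn h (Ioi a) μ) (hH : ∀ y ∈ Ioc a x, |h y| ≤ H)
    (hNh : ∀ y ∈ Ioc a x, N y * h y = E y) :
    HasDerivWithinAt (fun ξ => E ξ * μ.real (Ioc a ξ) + N ξ * ∫ y in Ioi ξ, h y ∂μ)
      (E' * μ.real (Ioo a x) + N' * ∫ y in Ici x, h y ∂μ) (Iio x) x := by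
  obtain ⟨KE, sE, hsE, hlipE⟩ := hE.hasStrictFDerivAt.exists_lipschitzOnWith
  obtain ⟨KN, sN, hsN, hlipN⟩ := hN.hasStrictFDerivAt.exists_lipschitzOnWith
  obtain ⟨l, u, hxlu, hlu⟩ := mem_nhds_iff_exists_Ioo_subset.1 (inter_mem hsE hsN)
  have hnear : Ioo (max a l) x ∈ 𝓝[<] x := Ioo_mem_nhdsLT (max_lt hax hxlu.1)
  have hmain : HasDerivWithinAt (fun ξ => E ξ * μ.real (Ioo a x) + N ξ * ∫ y in Ici x, h y ∂μ)
      (E' * μ.real (Ioo a x) + N' * ∫ y in Ici x, h y ∂μ) (Iio x) x :=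
    ((hE.hasDerivAt.mul_const _).add (hN.hasDerivAt.mul_const _)).hasDerivWithinAt
  have herr : HasDerivWithinAt (fun ξ => ∫ y in Ioo ξ x, (N ξ * h y - E ξ) ∂μ) 0 (Iio x) x := by
    refine hasDerivWithinAt_zero_of_abs_le_mul (C := H * KN + KE) (by simp)
      (tendsto_measureReal_Ioo_nhdsLT μ x) ?_
    filter_upwards [hnear] with ξ hξ
    have hs : Icc ξ x ⊆ sE ∩ sN := fun y hy =>
      hlu ⟨((le_max_right a l).trans_lt hξ.1).trans_le hy.1, hy.2.trans_lt hxlu.2⟩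
    have haξ : a < ξ := (le_max_left a l).trans_lt hξ.1
    calc _ ≤ (H * KN + KE) * ((x - ξ) * μ.real (Ioo ξ x)) :=
          abs_setIntegral_Ioo_sub_le hs (hlipE.mono inter_subset_left)
            (hlipN.mono inter_subset_right) (fun y hy => hH y ⟨haξ.trans hy.1, hy.2.le⟩)
            (fun y hy => hNh y ⟨haξ.trans hy.1, hy.2.le⟩)
      _ = (H * KN + KE) * |(ξ - x) * μ.real (Ioo ξ x)| := by
          rw [abs_mul, abs_of_neg (sub_neg.2 hξ.2), abs_of_nonneg measureReal_nonneg, neg_sub]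
  have hnear_eq : ∀ᶠ ξ in 𝓝[<] x, E ξ * μ.real (Ioc a ξ) + N ξ * ∫ y in Ioi ξ, h y ∂μ =
      E ξ * μ.real (Ioo a x) + N ξ * (∫ y in Ici x, h y ∂μ) +
        ∫ y in Ioo ξ x, (N ξ * h y - E ξ) ∂μ := by
    filter_upwards [hnear] with ξ hξ
    exact measureReal_Ioc_add_setIntegral_Ioi_of_lt ((le_max_left a l).trans_lt hξ.1) hξ.2
      (hh.mono_set (Ioi_subset_Ioi ((le_max_left a l).trans hξ.1.le)))
  have hx_eq := measureReal_Ioc_add_setIntegral_Ioi hax (hh.mono_set (Ici_subset_Ioi.2 hax))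
    (hNh x ⟨hax, le_rfl⟩)
  simpa only [add_zero] using
    (hmain.add herr).congr_of_eventuallyEq hnear_eq (by simpa using hx_eq)

end LeftDerivative

section Spider

variable {n : ℕ} {p : Fin n → ℝ} {θ : ℝ} {i : Fin n}

theorem spiderN_self (x : ℝ) :
    spiderN n p θ x i i = 1 / p i * Real.sinh (θ * x) + Real.exp (-θ * x) := if_pos rfl

theorem exp_neg_le_spiderN_self {x : ℝ} (hp : 0 < p i) (hθ : 0 ≤ θ) (hx : 0 ≤ x) :
    Real.exp (-θ * x) ≤ spiderN n p θ x i i := by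
  have : 0 ≤ 1 / p i * Real.sinh (θ * x) :=
    mul_nonneg (by positivity) (Real.sinh_nonneg_iff.2 (mul_nonneg hθ hx))
  rw [spiderN_self]
  linarith

theorem spiderN_self_pos {x : ℝ} (hp : 0 < p i) (hθ : 0 ≤ θ) (hx : 0 ≤ x) :
    0 < spiderN n p θ x i i :=
  (Real.exp_pos _).trans_le (exp_neg_le_spiderN_self hp hθ hx)

theorem hasStrictDerivAt_spiderN_self (x : ℝ) :
    HasStrictDerivAt (fun ξ => spiderN n p θ ξ i i)
      (θ * (1 / p i * Real.cosh (θ * x) - Real.exp (-θ * x))) x := by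
  simp only [spiderN_self]
  have hsinh := ((hasStrictDerivAt_id x).const_mul θ).sinh.const_mul (1 / p i)
  have hexp := ((hasStrictDerivAt_id x).const_mul (-θ)).exp
  exact (hsinh.add hexp).congr_deriv (by simp only [id]; ring)

theorem spiderGreen_self (x y : ℝ) :
    spiderGreen n p θ x i y i =
      1 / θ * Real.exp (-θ * max x y) * spiderN n p θ (min x y) i i := by
  rw [spiderGreen, if_pos rfl, spiderN_self]

theorem spiderGreen_self_of_le {x y : ℝ} (hyx : y ≤ x) :
    spiderGreen n p θ x i y i = 1 / θ * Real.exp (-θ * x) * spiderN n p θ y i i := by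
  rw [spiderGreen_self, max_eq_left hyx, min_eq_right hyx]

theorem spiderGreen_self_of_ge {x y : ℝ} (hxy : x ≤ y) :
    spiderGreen n p θ x i y i = 1 / θ * Real.exp (-θ * y) * spiderN n p θ x i i := by
  rw [spiderGreen_self, max_eq_right hxy, min_eq_left hxy]

theorem exp_mul_exp_le_spiderGreen_self {x y : ℝ} (hp : 0 < p i) (hθ : 0 < θ) (hx : 0 ≤ x)
    (hy : 0 ≤ y) : 1 / θ * Real.exp (-θ * x) * Real.exp (-θ * y) ≤ spiderGreen n p θ x i y i := by
  rcases le_total y x with hyx | hxy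
  · rw [spiderGreen_self_of_le hyx]
    gcongr
    exact exp_neg_le_spiderN_self hp hθ.le hy
  · rw [spiderGreen_self_of_ge hxy, mul_right_comm]
    gcongr
    exact exp_neg_le_spiderN_self hp hθ.le hx

theorem spiderGreen_div_of_ne {j : Fin n} {x₀ x y : ℝ} (hθ : θ ≠ 0) (hij : i ≠ j) :
    spiderGreen n p θ x i y j / spiderGreen n p θ x₀ i y j = Real.exp (-θ * (x - x₀)) := by
  rw [spiderGreen, spiderGreen, if_neg hij, if_neg hij, exp_neg_mul_sub]
  field_simp

theorem spiderN_div_of_ne {k : Fin n} {x₀ x : ℝ} (hik : i ≠ k) :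
    spiderN n p θ x i k / spiderN n p θ x₀ i k = Real.exp (-θ * (x - x₀)) := by
  rw [spiderN, spiderN, if_neg hik, if_neg hik, exp_neg_mul_sub]

theorem spiderGreen_self_div_of_le {x₀ x y : ℝ} (hp : 0 < p i) (hθ : 0 < θ) (hy : 0 ≤ y)
    (hyx : y ≤ x) (hyx₀ : y ≤ x₀) :
    spiderGreen n p θ x i y i / spiderGreen n p θ x₀ i y i = Real.exp (-θ * (x - x₀)) := by
  have := (spiderN_self_pos (n := n) hp hθ.le hy).ne'
  rw [spiderGreen_self_of_le hyx, spiderGreen_self_of_le hyx₀, exp_neg_mul_sub]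
  field_simp

noncomputable def spiderMartinCoeff (n : ℕ) (p : Fin n → ℝ) (θ x₀ : ℝ) (i : Fin n) (y : ℝ) : ℝ :=
  Real.exp (-θ * y) / (θ * spiderGreen n p θ x₀ i y i)

theorem spiderGreen_self_div_of_ge {x₀ x y : ℝ} (hxy : x ≤ y) :
    spiderGreen n p θ x i y i / spiderGreen n p θ x₀ i y i =
      spiderN n p θ x i i * spiderMartinCoeff n p θ x₀ i y := by
  rw [spiderGreen_self_of_ge hxy, spiderMartinCoeff]
  ring

theorem spiderN_mul_spiderMartinCoeff {x₀ y : ℝ} (hp : 0 < p i) (hθ : 0 < θ) (hy : 0 ≤ y)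
    (hyx₀ : y ≤ x₀) :
    spiderN n p θ y i i * spiderMartinCoeff n p θ x₀ i y = Real.exp (-θ * (y - x₀)) := by
  rw [← spiderGreen_self_div_of_ge le_rfl, spiderGreen_self_div_of_le hp hθ hy le_rfl hyx₀]

theorem abs_spiderMartinCoeff_le {x₀ y : ℝ} (hp : 0 < p i) (hθ : 0 < θ) (hx₀ : 0 ≤ x₀)
    (hy : 0 ≤ y) : |spiderMartinCoeff n p θ x₀ i y| ≤ Real.exp (θ * x₀) := by
  have hG := exp_mul_exp_le_spiderGreen_self (n := n) hp hθ hx₀ hy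
  have hG0 : 0 < θ * spiderGreen n p θ x₀ i y i := mul_pos hθ (lt_of_lt_of_le (by positivity) hG)
  have hexp : Real.exp (θ * x₀) * Real.exp (-θ * x₀) = 1 := by rw [← Real.exp_add]; simp
  rw [spiderMartinCoeff, abs_of_pos (div_pos (Real.exp_pos _) hG0), div_le_iff₀ hG0]
  calc Real.exp (-θ * y) = Real.exp (θ * x₀) * Real.exp (-θ * x₀) * Real.exp (-θ * y) := by
        rw [hexp, one_mul]
    _ = Real.exp (θ * x₀) * (θ * (1 / θ * Real.exp (-θ * x₀) * Real.exp (-θ * y))) := by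
        field_simp
    _ ≤ Real.exp (θ * x₀) * (θ * spiderGreen n p θ x₀ i y i) := by gcongr

theorem measurable_spiderMartinCoeff (x₀ : ℝ) :
    Measurable (spiderMartinCoeff n p θ x₀ i) := by
  unfold spiderMartinCoeff
  simp only [spiderGreen_self, spiderN_self]
  fun_prop

theorem integrableOn_spiderMartinCoeff (μ : Measure ℝ) [IsFiniteMeasure μ] {x₀ : ℝ}
    (hp : 0 < p i) (hθ : 0 < θ) (hx₀ : 0 ≤ x₀) :
    IntegrableOn (spiderMartinCoeff n p θ x₀ i) (Ioi 0) μ :=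
  Measure.integrableOn_of_bounded (measure_ne_top μ _)
    (measurable_spiderMartinCoeff x₀).aestronglyMeasurable
    (ae_restrict_of_forall_mem measurableSet_Ioi fun _ hy =>
      abs_spiderMartinCoeff_le hp hθ hx₀ (le_of_lt hy))

theorem setIntegral_spiderGreen_self_div (μ : Measure ℝ) [IsFiniteMeasure μ] {x₀ ξ : ℝ}
    (hp : 0 < p i) (hθ : 0 < θ) (hξ : 0 < ξ) (hξx₀ : ξ ≤ x₀) :
    ∫ y in Ioi 0, spiderGreen n p θ ξ i y i / spiderGreen n p θ x₀ i y i ∂μ =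
      Real.exp (-θ * (ξ - x₀)) * μ.real (Ioc 0 ξ) +
        spiderN n p θ ξ i i * ∫ y in Ioi ξ, spiderMartinCoeff n p θ x₀ i y ∂μ := by
  have hlow : EqOn (fun y => spiderGreen n p θ ξ i y i / spiderGreen n p θ x₀ i y i)
      (fun _ => Real.exp (-θ * (ξ - x₀))) (Ioc 0 ξ) := fun y hy =>
    spiderGreen_self_div_of_le hp hθ hy.1.le hy.2 (hy.2.trans hξx₀)
  have hhigh : EqOn (fun y => spiderGreen n p θ ξ i y i / spiderGreen n p θ x₀ i y i)
      (fun y => spiderN n p θ ξ i i * spiderMartinCoeff n p θ x₀ i y) (Ioi ξ) := fun _ hy =>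
    spiderGreen_self_div_of_ge (le_of_lt hy)
  have hcoeff := (integrableOn_spiderMartinCoeff μ hp hθ (hξ.le.trans hξx₀)).mono_set
    (Ioi_subset_Ioi hξ.le)
  rw [← Ioc_union_Ioi_eq_Ioi hξ.le, setIntegral_union (Ioc_disjoint_Ioi le_rfl) measurableSet_Ioi
      ((integrableOn_const (measure_ne_top μ _)).congr_fun hlow.symm measurableSet_Ioc)
      (IntegrableOn.congr_fun (hcoeff.const_mul _) hhigh.symm measurableSet_Ioi),
    setIntegral_congr_fun measurableSet_Ioc hlow, setIntegral_congr_fun measurableSet_Ioi hhigh,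
    setIntegral_const, integral_const_mul, smul_eq_mul, mul_comm (μ.real _)]

theorem setIntegral_spiderGreen_div_add_of_ne (μ : Measure ℝ) {k : Fin n} {x₀ ξ : ℝ}
    (hθ : θ ≠ 0) (hik : i ≠ k) (c : ℝ) :
    (∫ y in Ioi 0, spiderGreen n p θ ξ i y k / spiderGreen n p θ x₀ i y k ∂μ) +
        c * (spiderN n p θ ξ i k / spiderN n p θ x₀ i k) =
      (μ.real (Ioi 0) + c) * Real.exp (-θ * (ξ - x₀)) := by
  simp_rw [spiderGreen_div_of_ne hθ hik, spiderN_div_of_ne hik, setIntegral_const, smul_eq_mul]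
  ring

theorem spider_represented_eq (τ : Fin n → Measure ℝ) [∀ k, IsFiniteMeasure (τ k)]
    (b : Fin n → ℝ) (t₀ : ℝ) {x₀ ξ : ℝ} (hp : 0 < p i) (hθ : 0 < θ) (hξ : 0 < ξ)
    (hξx₀ : ξ ≤ x₀) :
    t₀ * Real.exp (-θ * (ξ - x₀)) + ∑ k, ((∫ y in Ioi 0,
        spiderGreen n p θ ξ i y k / spiderGreen n p θ x₀ i y k ∂(τ k)) +
          b k * (spiderN n p θ ξ i k / spiderN n p θ x₀ i k)) =
      (t₀ + ∑ k ∈ Finset.univ.erase i, ((τ k).real (Ioi 0) + b k)) * Real.exp (-θ * (ξ - x₀)) +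
        b i / spiderN n p θ x₀ i i * spiderN n p θ ξ i i +
        (Real.exp (-θ * (ξ - x₀)) * (τ i).real (Ioc 0 ξ) +
          spiderN n p θ ξ i i * ∫ y in Ioi ξ, spiderMartinCoeff n p θ x₀ i y ∂(τ i)) := by
  rw [← Finset.add_sum_erase _ _ (Finset.mem_univ i),
    Finset.sum_congr rfl fun k hk => setIntegral_spiderGreen_div_add_of_ne (τ k) hθ.ne'
      (Finset.ne_of_mem_erase hk).symm (b k),
    setIntegral_spiderGreen_self_div (τ i) hp hθ hξ hξx₀, ← Finset.sum_mul]
  ring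

theorem mul_spiderPsiT (hθ : θ ≠ 0) (x : ℝ) :
    θ * spiderPsiT n p θ x i = spiderN n p θ x i i := by
  rw [spiderPsiT, spiderN_self]
  field_simp

theorem spider_wronskian (hp : p i ≠ 0) (hθ : θ ≠ 0) {x x₀ A B fx d : ℝ}
    (hfx : fx = Real.exp (-θ * (x - x₀)) * A + spiderN n p θ x i i * B)
    (hd : d = -θ * Real.exp (-θ * (x - x₀)) * A +
      θ * (1 / p i * Real.cosh (θ * x) - Real.exp (-θ * x)) * B) :
    p i * Real.exp (-θ * x₀) *
      (fx * (1 / p i * Real.cosh (θ * x) - Real.exp (-θ * x)) - d * spiderPsiT n p θ x i) = A := by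
  have hexp : Real.exp (-θ * x₀) * Real.exp (-θ * (x - x₀)) * Real.exp (θ * x) = 1 := by
    rw [← Real.exp_add, ← Real.exp_add]; ring_nf; exact Real.exp_zero
  have hψ := mul_spiderPsiT (p := p) (i := i) hθ x
  rw [spiderN_self] at hψ
  calc _ = p i * (1 / p i) * (Real.exp (-θ * x₀) * Real.exp (-θ * (x - x₀)) *
        (Real.cosh (θ * x) + Real.sinh (θ * x))) * A := by
          rw [hfx, hd, spiderN_self]
          linear_combination p i * Real.exp (-θ * x₀) * (Real.exp (-θ * (x - x₀)) * A -
            (1 / p i * Real.cosh (θ * x) - Real.exp (-θ * x)) * B) * hψ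
    _ = A := by rw [Real.cosh_add_sinh, hexp, mul_one_div_cancel hp, one_mul, one_mul]

end Spider

theorem stmt_12_general (n : ℕ) (p : Fin n → ℝ)
    (hp : ∀ i, 0 < p i)
    (r : ℝ) (hr : 0 < r) (θ : ℝ) (hθ : θ = Real.sqrt (2 * r))
    (x₀ : ℝ) (i₀ : Fin n)
    (τ : Fin n → Measure ℝ) [∀ k, IsFiniteMeasure (τ k)]
    (b : Fin n → ℝ) (t₀ : ℝ)
    (f : ℝ → Fin n → ℝ)
    (hf : ∀ x i, f x i = t₀ * Real.exp (-θ * (x - x₀)) +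
      ∑ k, ((∫ y in Set.Ioi (0:ℝ),
          spiderGreen n p θ x i y k / spiderGreen n p θ x₀ i₀ y k ∂(τ k)) +
        b k * (spiderN n p θ x i k / spiderN n p θ x₀ i₀ k))) :
    ∀ x, 0 < x → x ≤ x₀ → ∃ d : ℝ,
      Tendsto (fun δ => (f x i₀ - f (x - δ) i₀) / δ) (𝓝[>] 0) (𝓝 d) ∧
      (τ i₀ (Set.Ioo 0 x)).toReal + t₀ +
          ∑ k ∈ Finset.univ.erase i₀, ((τ k (Set.Ioi 0)).toReal + b k) =
        p i₀ * Real.exp (-θ * x₀) *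
          (f x i₀ * ((1 / p i₀) * Real.cosh (θ * x) - Real.exp (-θ * x)) -
            d * spiderPsiT n p θ x i₀) := by
  intro x hx hxx₀
  have hθ0 : 0 < θ := hθ ▸ Real.sqrt_pos.2 (by positivity)
  have hE := hasStrictDerivAt_exp_neg_mul_sub θ x₀ x
  have hN := hasStrictDerivAt_spiderN_self (p := p) (θ := θ) (i := i₀) x
  have hh := integrableOn_spiderMartinCoeff (τ i₀) (hp i₀) hθ0 (hx.le.trans hxx₀)
  have hF := hasDerivWithinAt_Iio_measureReal_Ioc_add_setIntegral_Ioi hE hN hx hh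
    (fun y hy => abs_spiderMartinCoeff_le (hp i₀) hθ0 (hx.le.trans hxx₀) hy.1.le)
    (fun y hy => spiderN_mul_spiderMartinCoeff (hp i₀) hθ0 hy.1.le (hy.2.trans hxx₀))
  have hf_eq : ∀ ξ ∈ Ioc 0 x₀, f ξ i₀ = _ := fun ξ hξ =>
    (hf ξ i₀).trans (spider_represented_eq τ b t₀ (hp i₀) hθ0 hξ.1 hξ.2)
  have hderiv := ((((hE.hasDerivAt.const_mul _).add
    (hN.hasDerivAt.const_mul _)).hasDerivWithinAt.add hF)).congr_of_eventuallyEq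
      (eventually_of_mem (Ioo_mem_nhdsLT hx) fun ξ hξ => hf_eq ξ ⟨hξ.1, hξ.2.le.trans hxx₀⟩)
      (hf_eq x ⟨hx, hxx₀⟩)
  have hfx := measureReal_Ioc_add_setIntegral_Ioi (E := fun ξ => Real.exp (-θ * (ξ - x₀)))
    (N := fun ξ => spiderN n p θ ξ i₀ i₀) hx (hh.mono_set (Ici_subset_Ioi.2 hx))
    (spiderN_mul_spiderMartinCoeff (hp i₀) hθ0 hx.le hxx₀)
  simp only [← measureReal_def]
  refine ⟨_, hderiv.tendsto_sub_div_nhdsGT, (spider_wronskian (hp i₀).ne' hθ0.ne'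
    (B := b i₀ / spiderN n p θ x₀ i₀ i₀ + ∫ y in Ici x, spiderMartinCoeff n p θ x₀ i₀ y ∂τ i₀)
    ?_ ?_).symm⟩
  · rw [hf_eq x ⟨hx, hxx₀⟩, hfx]
    ring
  · ring

/-- for a function `f` represented by a representing datum normalized at
`(x₀,i₀)`, for every `0 < x ≤ x₀` the left derivative `f⁻(x,i₀)` exists and
`τ_{i₀}((0,x)) + t₀ + Σ_{k ≠ i₀}(τ_k((0,∞)) + b_k)
  = p_{i₀}·e^{−θx₀}·(f(x,i₀)·ψ̃′(x,i₀) − f⁻(x,i₀)·ψ̃(x,i₀))`,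
where `ψ̃′(x,i₀) = (1/p_{i₀})·cosh(θx) − e^{−θx}`. -/
theorem stmt_12 (n : ℕ) (hn : 1 ≤ n) (p : Fin n → ℝ)
    (hp : ∀ i, 0 < p i) (hpsum : ∑ i, p i = 1)
    (r : ℝ) (hr : 0 < r) (θ : ℝ) (hθ : θ = Real.sqrt (2 * r))
    (x₀ : ℝ) (hx₀ : 0 < x₀) (i₀ : Fin n)
    (τ : Fin n → Measure ℝ) [∀ k, IsFiniteMeasure (τ k)]
    (hτsupp : ∀ k, τ k (Set.Iic 0) = 0)
    (b : Fin n → ℝ) (hb : ∀ k, 0 ≤ b k) (t₀ : ℝ) (ht₀ : 0 ≤ t₀)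
    (hnorm : t₀ + ∑ k, ((τ k (Set.Ioi 0)).toReal + b k) = 1)
    (f : ℝ → Fin n → ℝ)
    (hf : ∀ x i, f x i = t₀ * Real.exp (-θ * (x - x₀)) +
      ∑ k, ((∫ y in Set.Ioi (0:ℝ),
          spiderGreen n p θ x i y k / spiderGreen n p θ x₀ i₀ y k ∂(τ k)) +
        b k * (spiderN n p θ x i k / spiderN n p θ x₀ i₀ k))) :
    ∀ x, 0 < x → x ≤ x₀ → ∃ d : ℝ,
      Tendsto (fun δ => (f x i₀ - f (x - δ) i₀) / δ) (𝓝[>] 0) (𝓝 d) ∧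
      (τ i₀ (Set.Ioo 0 x)).toReal + t₀ +
          ∑ k ∈ Finset.univ.erase i₀, ((τ k (Set.Ioi 0)).toReal + b k) =
        p i₀ * Real.exp (-θ * x₀) *
          (f x i₀ * ((1 / p i₀) * Real.cosh (θ * x) - Real.exp (-θ * x)) -
            d * spiderPsiT n p θ x i₀) :=
  stmt_12_general n p hp r hr θ hθ x₀ i₀ τ b t₀ f hf
end

section
/- Suppose g admits the resolvent representation g(x,i) = Σ_{k=1}^n 2p_k ∫₀^∞ g_r((x,i),(y,k)) f_k(y) dy + (1/θ)·e^{−θx}·Δ₀. Then for every x ≥ 0 and every leg i the right derivative g⁺(x,i) exists and 2·∫_x^∞ e^{−θy}·f_i(y) dy = e^{−θx}·( g⁺(x,i) + θ·g(x,i) ). -/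
open Filter Topology MeasureTheory

/-!
On leg `i` the representation reads
`g(t) = A e^{-θt} + (2 p_i / θ) (e^{-θt} ∫₀ᵗ ψ f_i + ψ(t) ∫ₜ^∞ e^{-θy} f_i)`,
`ψ(t) = sinh(θt) / p_i + e^{-θt}`, since the other legs only contribute multiples of `e^{-θt}`.
For a potential `a(t) ∫₀ᵗ b f + b(t) ∫ₜ^∞ a f` the increment over `(x, x + δ]` leaves the
remainder `∫ₓ^{x+δ} (a(x+δ) b(y) - b(x+δ) a(y)) f(y) dy`. The bracket vanishes on the diagonal,
so against a locally bounded `f` the remainder is `o(δ)`, without any continuity of `f`, and the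
right derivative is `a'(x) ∫₀ˣ b f + b'(x) ∫ₓ^∞ a f`. The identity then comes from the
Wronskian-type relation `e^{-θt} (ψ' + θψ) = θ / p_i`.
-/

open Set Asymptotics

theorem HasDerivWithinAt.tendsto_slope_zero_right {f : ℝ → ℝ} {f' x : ℝ}
    (h : HasDerivWithinAt f f' (Ioi x) x) :
    Tendsto (fun t => (f (x + t) - f x) / t) (𝓝[>] 0) (𝓝 f') := by
  have hshift : Tendsto (fun t => x + t) (𝓝[>] 0) (𝓝[>] x) :=
    tendsto_nhdsWithin_of_tendsto_nhds_of_eventually_within _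
      (((continuous_const_add x).tendsto' 0 x (add_zero x)).mono_left nhdsWithin_le_nhds)
      (eventually_nhdsWithin_of_forall fun t ht => lt_add_of_pos_right x ht)
  refine (((hasDerivWithinAt_iff_tendsto_slope' (lt_irrefl x)).1 h).comp hshift).congr fun t => ?_
  simp [slope_def_field]

theorem hasDerivWithinAt_setIntegral_Ioc_of_tendsto_zero {E : Type*} [NormedAddCommGroup E]
    [NormedSpace ℝ E] {ψ : ℝ → ℝ → E} {x : ℝ}
    (hψ : Tendsto (Function.uncurry ψ) (𝓝[>] x ×ˢ 𝓝[>] x) (𝓝 0)) :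
    HasDerivWithinAt (fun t => ∫ y in Ioc x t, ψ t y) 0 (Ioi x) x := by
  rw [hasDerivWithinAt_iff_isLittleO, isLittleO_iff]
  intro c hc
  obtain ⟨S, hS, hψS⟩ := (eventually_prod_self_iff (r := fun t y => ‖ψ t y‖ ≤ c)).1
    ((hψ.eventually (Metric.closedBall_mem_nhds 0 hc)).mono fun _ => mem_closedBall_zero_iff.1)
  obtain ⟨u, hxu, huS⟩ := mem_nhdsGT_iff_exists_Ioo_subset.1 hS
  filter_upwards [Ioo_mem_nhdsGT hxu] with t ht
  have hbound : ∀ y ∈ Ioc x t, ‖ψ t y‖ ≤ c := fun y hy =>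
    hψS t (huS ht) y (huS ⟨hy.1, hy.2.trans_lt ht.2⟩)
  have := norm_setIntegral_le_of_norm_le_const (μ := volume) measure_Ioc_lt_top hbound
  simpa [Real.volume_real_Ioc_of_le ht.1.le, abs_of_pos (sub_pos.2 ht.1)] using this

theorem integrableOn_Ioc_mul_of_bounded {v f : ℝ → ℝ} {a b C : ℝ} (hv : Continuous v)
    (hf : Measurable f) (hC : ∀ y ∈ Icc a b, |f y| ≤ C) :
    IntegrableOn (fun y => v y * f y) (Ioc a b) :=
  ((Measure.integrableOn_of_bounded measure_Icc_lt_top.ne hf.aestronglyMeasurable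
    (ae_restrict_of_forall_mem measurableSet_Icc hC)).continuousOn_mul hv.continuousOn
    isCompact_Icc).mono_set Ioc_subset_Icc_self

theorem isBoundedUnder_nhdsGT_of_forall_Icc {f : ℝ → ℝ} {a b x C : ℝ} (hax : a ≤ x)
    (hxb : x < b) (hC : ∀ y ∈ Icc a b, |f y| ≤ C) :
    IsBoundedUnder (· ≤ ·) (𝓝[>] x) (fun y => ‖f y‖) :=
  isBoundedUnder_of_eventually_le (a := C) <| by
    filter_upwards [Ioo_mem_nhdsGT hxb] with y hy
    exact hC y ⟨hax.trans hy.1.le, hy.2.le⟩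

noncomputable def greenPotential (a b f : ℝ → ℝ) (l t : ℝ) : ℝ :=
  a t * (∫ y in Ioc l t, b y * f y) + b t * ∫ y in Ioi t, a y * f y

theorem greenPotential_eq_add_setIntegral_Ioc {a b f : ℝ → ℝ} {l x t : ℝ} (hlx : l ≤ x)
    (hxt : x ≤ t) (hbf : IntegrableOn (fun y => b y * f y) (Ioc l t))
    (haf : IntegrableOn (fun y => a y * f y) (Ioi x)) :
    greenPotential a b f l t
      = a t * (∫ y in Ioc l x, b y * f y) + b t * (∫ y in Ioi x, a y * f y)
        + ∫ y in Ioc x t, (a t * b y - b t * a y) * f y := by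
  have hbf_x : IntegrableOn (fun y => b y * f y) (Ioc x t) :=
    hbf.mono_set (Ioc_subset_Ioc_left hlx)
  have haf_t : IntegrableOn (fun y => a y * f y) (Ioc x t) := haf.mono_set Ioc_subset_Ioi_self
  have hsplit_b : ∫ y in Ioc l t, b y * f y
      = (∫ y in Ioc l x, b y * f y) + ∫ y in Ioc x t, b y * f y := by
    rw [← Ioc_union_Ioc_eq_Ioc hlx hxt, setIntegral_union (Ioc_disjoint_Ioc_of_le le_rfl)
      measurableSet_Ioc (hbf.mono_set (Ioc_subset_Ioc_right hxt)) hbf_x]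
  have hsplit_a : ∫ y in Ioi x, a y * f y
      = (∫ y in Ioc x t, a y * f y) + ∫ y in Ioi t, a y * f y := by
    rw [← Ioc_union_Ioi_eq_Ioi hxt, setIntegral_union Ioc_disjoint_Ioi_same measurableSet_Ioi
      haf_t (haf.mono_set (Ioi_subset_Ioi hxt))]
  have hsplit_kernel : ∫ y in Ioc x t, (a t * b y - b t * a y) * f y
      = a t * (∫ y in Ioc x t, b y * f y) - b t * ∫ y in Ioc x t, a y * f y := by
    rw [← integral_const_mul, ← integral_const_mul,
      ← integral_sub (hbf_x.const_mul _) (haf_t.const_mul _)]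
    congr 1 with y
    ring
  rw [greenPotential, hsplit_kernel, hsplit_b, hsplit_a]
  ring

theorem hasDerivWithinAt_greenPotential {a b f : ℝ → ℝ} {l x a' b' : ℝ} (hlx : l ≤ x)
    (ha : HasDerivAt a a' x) (hb : HasDerivAt b b' x)
    (hf : IsBoundedUnder (· ≤ ·) (𝓝[>] x) (fun y => ‖f y‖))
    (hbf : ∀ᶠ t in 𝓝[>] x, IntegrableOn (fun y => b y * f y) (Ioc l t))
    (haf : IntegrableOn (fun y => a y * f y) (Ioi x)) :
    HasDerivWithinAt (greenPotential a b f l)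
      (a' * (∫ y in Ioc l x, b y * f y) + b' * ∫ y in Ioi x, a y * f y) (Ioi x) x := by
  have hkernel : Tendsto (fun p : ℝ × ℝ => (a p.1 * b p.2 - b p.1 * a p.2) * f p.2)
      (𝓝[>] x ×ˢ 𝓝[>] x) (𝓝 0) := by
    have hfst : Tendsto Prod.fst (𝓝 (x, x)) (𝓝 x) := continuous_fst.tendsto (x, x)
    have hsnd : Tendsto Prod.snd (𝓝 (x, x)) (𝓝 x) := continuous_snd.tendsto (x, x)
    have ha' := ha.continuousAt.tendsto
    have hb' := hb.continuousAt.tendsto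
    have hdiag : Tendsto (fun p : ℝ × ℝ => a p.1 * b p.2 - b p.1 * a p.2) (𝓝 (x, x)) (𝓝 0) := by
      simpa [Function.comp_def, mul_comm] using
        ((ha'.comp hfst).mul (hb'.comp hsnd)).sub ((hb'.comp hfst).mul (ha'.comp hsnd))
    refine (hdiag.mono_left ?_).zero_mul_isBoundedUnder_le (tendsto_snd.isBoundedUnder_comp hf)
    rw [nhds_prod_eq]
    exact prod_mono nhdsWithin_le_nhds nhdsWithin_le_nhds
  have hmain := ((ha.mul_const (∫ y in Ioc l x, b y * f y)).add
    (hb.mul_const (∫ y in Ioi x, a y * f y))).hasDerivWithinAt (s := Ioi x)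
  have hrem := hasDerivWithinAt_setIntegral_Ioc_of_tendsto_zero
    (ψ := fun t y => (a t * b y - b t * a y) * f y) hkernel
  refine add_zero (a' * _ + b' * _) ▸ (hmain.add hrem).congr_of_eventuallyEq ?_ ?_
  · filter_upwards [hbf, self_mem_nhdsWithin] with t hbft (hxt : x < t)
    exact greenPotential_eq_add_setIntegral_Ioc hlx hxt.le hbft haf
  · simp [greenPotential]

noncomputable def spiderPsi (q θ t : ℝ) : ℝ := (1 / q) * Real.sinh (θ * t) + Real.exp (-θ * t)

theorem continuous_spiderPsi (q θ : ℝ) : Continuous (spiderPsi q θ) := by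
  unfold spiderPsi
  fun_prop

theorem hasDerivAt_exp_neg_mul (θ t : ℝ) :
    HasDerivAt (fun t => Real.exp (-θ * t)) (-θ * Real.exp (-θ * t)) t := by
  simpa [mul_comm] using ((hasDerivAt_id t).const_mul (-θ)).exp

theorem hasDerivAt_spiderPsi (q θ t : ℝ) :
    HasDerivAt (spiderPsi q θ) (θ / q * Real.cosh (θ * t) - θ * Real.exp (-θ * t)) t := by
  have hsinh := (((hasDerivAt_id t).const_mul θ).sinh).const_mul (1 / q)
  exact (hsinh.add (hasDerivAt_exp_neg_mul θ t)).congr_deriv (by simp only [id]; ring)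

theorem exp_neg_mul_mul_deriv_add_spiderPsi (q θ t : ℝ) :
    Real.exp (-θ * t) * (θ / q * Real.cosh (θ * t) - θ * Real.exp (-θ * t) + θ * spiderPsi q θ t)
      = θ / q := by
  have hexp : Real.exp (-θ * t) * Real.exp (θ * t) = 1 := by
    rw [← Real.exp_add]
    simp
  rw [← Real.cosh_add_sinh (θ * t)] at hexp
  rw [spiderPsi]
  linear_combination θ / q * hexp

section Spider

variable {n : ℕ} {p : Fin n → ℝ} {θ : ℝ}

theorem integral_spiderGreen_of_ne {i k : Fin n} (hik : i ≠ k) (t : ℝ) (h : ℝ → ℝ) :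
    ∫ y in Ioi 0, spiderGreen n p θ t i y k * h y
      = θ⁻¹ * Real.exp (-θ * t) * ∫ y in Ioi 0, Real.exp (-θ * y) * h y := by
  rw [← integral_const_mul]
  congr 1 with y
  simp only [spiderGreen, hik, if_false]
  ring

theorem integral_spiderGreen_self {i : Fin n} {t : ℝ} (ht : 0 ≤ t) {h : ℝ → ℝ}
    (hpsi : IntegrableOn (fun y => spiderPsi (p i) θ y * h y) (Ioc 0 t))
    (he : IntegrableOn (fun y => Real.exp (-θ * y) * h y) (Ioi t)) :
    ∫ y in Ioi 0, spiderGreen n p θ t i y i * h y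
      = θ⁻¹ * greenPotential (fun y => Real.exp (-θ * y)) (spiderPsi (p i) θ) h 0 t := by
  have hbelow : EqOn (fun y => spiderGreen n p θ t i y i * h y)
      (fun y => θ⁻¹ * Real.exp (-θ * t) * (spiderPsi (p i) θ y * h y)) (Ioc 0 t) := by
    intro y hy
    simp only [spiderGreen, if_true, max_eq_left hy.2, min_eq_right hy.2, spiderPsi]
    ring
  have habove : EqOn (fun y => spiderGreen n p θ t i y i * h y)
      (fun y => θ⁻¹ * spiderPsi (p i) θ t * (Real.exp (-θ * y) * h y)) (Ioi t) := by
    intro y (hy : t < y)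
    simp only [spiderGreen, if_true, max_eq_right hy.le, min_eq_left hy.le, spiderPsi]
    ring
  rw [← Ioc_union_Ioi_eq_Ioi ht, setIntegral_union Ioc_disjoint_Ioi_same measurableSet_Ioi
      (IntegrableOn.congr_fun (hpsi.const_mul _) hbelow.symm measurableSet_Ioc)
      (IntegrableOn.congr_fun (he.const_mul _) habove.symm measurableSet_Ioi),
    setIntegral_congr_fun measurableSet_Ioc hbelow, setIntegral_congr_fun measurableSet_Ioi habove,
    integral_const_mul, integral_const_mul, greenPotential]
  ring

theorem sum_integral_spiderGreen (f : Fin n → ℝ → ℝ) (i : Fin n) {t : ℝ} (ht : 0 ≤ t)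
    (hpsi : IntegrableOn (fun y => spiderPsi (p i) θ y * f i y) (Ioc 0 t))
    (he : IntegrableOn (fun y => Real.exp (-θ * y) * f i y) (Ioi t)) :
    ∑ k, 2 * p k * ∫ y in Ioi 0, spiderGreen n p θ t i y k * f k y
      = (∑ k ∈ Finset.univ.erase i, 2 * p k * θ⁻¹ * ∫ y in Ioi 0, Real.exp (-θ * y) * f k y)
          * Real.exp (-θ * t)
        + 2 * p i * θ⁻¹
          * greenPotential (fun y => Real.exp (-θ * y)) (spiderPsi (p i) θ) (f i) 0 t := by
  rw [← Finset.add_sum_erase _ _ (Finset.mem_univ i), integral_spiderGreen_self ht hpsi he,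
    Finset.sum_mul, add_comm]
  congr 1
  · refine Finset.sum_congr rfl fun k hk => ?_
    rw [integral_spiderGreen_of_ne (Finset.ne_of_mem_erase hk).symm]
    ring
  · ring

end Spider

theorem stmt_14_general (n : ℕ) (p : Fin n → ℝ)
    (hp : ∀ k, 0 < p k)
    (r : ℝ) (hr : 0 < r) (θ : ℝ) (hθ : θ = Real.sqrt (2 * r))
    (f : Fin n → ℝ → ℝ) (hf_meas : ∀ k, Measurable (f k))
    (hf_locbdd : ∀ k, ∀ K : ℝ, ∃ C, ∀ y ∈ Set.Icc (0:ℝ) K, |f k y| ≤ C)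
    (hf_int : ∀ k, IntegrableOn (fun y => Real.exp (-θ * y) * |f k y|) (Set.Ioi 0))
    (Δ₀ : ℝ) (g : ℝ → Fin n → ℝ)
    (hrep : ∀ x ≥ (0:ℝ), ∀ i, g x i =
      (∑ k, 2 * p k * ∫ y in Set.Ioi (0:ℝ), spiderGreen n p θ x i y k * f k y) +
        (1/θ) * Real.exp (-θ * x) * Δ₀) :
    ∀ x ≥ (0:ℝ), ∀ i, ∃ d : ℝ,
      Tendsto (fun δ => (g (x + δ) i - g x i) / δ) (𝓝[>] 0) (𝓝 d) ∧
      2 * (∫ y in Set.Ioi x, Real.exp (-θ * y) * f i y) =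
        Real.exp (-θ * x) * (d + θ * g x i) := by
  intro x hx i
  have hθ0 : θ ≠ 0 := hθ ▸ (Real.sqrt_pos.2 (by positivity)).ne'
  have he : ∀ k, IntegrableOn (fun y => Real.exp (-θ * y) * f k y) (Ioi 0) := fun k =>
    (hf_int k).mono' (by fun_prop) (ae_of_all _ fun y => by simp)
  have hpsi : ∀ t, IntegrableOn (fun y => spiderPsi (p i) θ y * f i y) (Ioc 0 t) := fun t =>
    integrableOn_Ioc_mul_of_bounded (continuous_spiderPsi _ _) (hf_meas i)
      (hf_locbdd i t).choose_spec
  set A := (∑ k ∈ Finset.univ.erase i, 2 * p k * θ⁻¹ * ∫ y in Ioi 0, Real.exp (-θ * y) * f k y)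
    + θ⁻¹ * Δ₀
  have hg : ∀ t ≥ x, g t i = A * Real.exp (-θ * t) + 2 * p i * θ⁻¹
      * greenPotential (fun y => Real.exp (-θ * y)) (spiderPsi (p i) θ) (f i) 0 t := by
    intro t ht
    rw [hrep t (hx.trans ht) i, sum_integral_spiderGreen f i (hx.trans ht) (hpsi t)
      ((he i).mono_set (Ioi_subset_Ioi (hx.trans ht)))]
    ring
  have hderiv := ((hasDerivAt_exp_neg_mul θ x).const_mul A).hasDerivWithinAt.add
    ((hasDerivWithinAt_greenPotential hx (hasDerivAt_exp_neg_mul θ x)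
      (hasDerivAt_spiderPsi (p i) θ x)
      (isBoundedUnder_nhdsGT_of_forall_Icc hx (lt_add_one x) (hf_locbdd i (x + 1)).choose_spec)
      (Eventually.of_forall hpsi) ((he i).mono_set (Ioi_subset_Ioi hx))).const_mul
      (2 * p i * θ⁻¹))
  refine ⟨_, (hderiv.congr (fun t (ht : x < t) => hg t ht.le) (hg x le_rfl))
    |>.tendsto_slope_zero_right, ?_⟩
  have hc : 2 * p i * θ⁻¹ * (θ / p i) = 2 := by field_simp [(hp i).ne']
  rw [hg x le_rfl, greenPotential]
  linear_combination (-(2 * p i * θ⁻¹) * ∫ y in Ioi x, Real.exp (-θ * y) * f i y)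
      * exp_neg_mul_mul_deriv_add_spiderPsi (p i) θ x
    - (∫ y in Ioi x, Real.exp (-θ * y) * f i y) * hc

/-- if `g` admits the resolvent representation
`g(x,i) = Σ_k 2p_k ∫₀^∞ g_r((x,i),(y,k)) f_k(y) dy + (1/θ)e^{−θx}·Δ₀`, then for every
`x ≥ 0` and every leg `i` the right derivative `g⁺(x,i)` exists and
`2∫_x^∞ e^{−θy} f_i(y) dy = e^{−θx}(g⁺(x,i) + θ·g(x,i))`. -/
theorem stmt_14 (n : ℕ) (hn : 1 ≤ n) (p : Fin n → ℝ)
    (hp : ∀ k, 0 < p k) (hpsum : ∑ k, p k = 1)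
    (r : ℝ) (hr : 0 < r) (θ : ℝ) (hθ : θ = Real.sqrt (2 * r))
    (f : Fin n → ℝ → ℝ) (hf_meas : ∀ k, Measurable (f k))
    (hf_locbdd : ∀ k, ∀ K : ℝ, ∃ C, ∀ y ∈ Set.Icc (0:ℝ) K, |f k y| ≤ C)
    (hf_int : ∀ k, IntegrableOn (fun y => Real.exp (-θ * y) * |f k y|) (Set.Ioi 0))
    (Δ₀ : ℝ) (g : ℝ → Fin n → ℝ)
    (hrep : ∀ x ≥ (0:ℝ), ∀ i, g x i =
      (∑ k, 2 * p k * ∫ y in Set.Ioi (0:ℝ), spiderGreen n p θ x i y k * f k y) +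
        (1/θ) * Real.exp (-θ * x) * Δ₀) :
    ∀ x ≥ (0:ℝ), ∀ i, ∃ d : ℝ,
      Tendsto (fun δ => (g (x + δ) i - g x i) / δ) (𝓝[>] 0) (𝓝 d) ∧
      2 * (∫ y in Set.Ioi x, Real.exp (-θ * y) * f i y) =
        Real.exp (-θ * x) * (d + θ * g x i) :=
  stmt_14_general n p hp r hr θ hθ f hf_meas hf_locbdd hf_int Δ₀ g hrep
end
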